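/- arXiv:1008.4674 — 4 statements merged into one kernel-verified Lean document; each statement's English description precedes it below -/
import Mathlib

section
/- Let (r_q)_{q ∈ ℤ} and (R_q)_{q ∈ ℤ} be strictly increasing sequences of positive reals with r_q, R_q → 0 as q → −∞ and r_q, R_q → +∞ as q → +∞, and suppose r_{q+1} < R_{q+1} for all q. Then there exists a class-K∞ function Υ : ℝ≥0 → ℝ≥0 such that for every q ∈ ℤ and every s with r_{q+1} < s ≤ r_{q+2}, one has Υ(s) ≥ R_{q+2}². -/
open Filter NNReal

/-- A class-K∞ function: continuous, zero at zero, strictly increasing, unbounded. -/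
def IsKInfty (Υ : ℝ≥0 → ℝ≥0) : Prop :=
  Continuous Υ ∧ Υ 0 = 0 ∧ StrictMono Υ ∧ ∀ M, ∃ s, M < Υ s

/-!
With `c q = R (q + 1) ^ 2`, take the supremum `g` of the ramps rising linearly from `0` at
`r (q - 1)` to `c q` at `r q`. It is finite (later ramps have not started, earlier ones stay below
`c q` as `c` is monotone), it is at least `c q` from `r q` on, it is continuous because near any
positive point only three ramps are active, and it tends to `0` at `0` because `c → 0` at `-∞`.
Then `s ↦ s + g s` is of class K∞.
-/

open Set Topology

theorem isKInfty_id_add {g : ℝ≥0 → ℝ≥0} (hcont : Continuous g) (hmono : Monotone g)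
    (hzero : g 0 = 0) : IsKInfty fun s => s + g s :=
  ⟨continuous_id.add hcont, by simp [hzero],
    fun _ _ h => add_lt_add_of_lt_of_le h (hmono h.le),
    fun M => ⟨M + 1, (lt_add_one M).trans_le le_self_add⟩⟩

noncomputable def ramp (a b s : ℝ≥0) : ℝ≥0 := min 1 ((s - a) / (b - a))

theorem ramp_le_one (a b s : ℝ≥0) : ramp a b s ≤ 1 := min_le_left _ _

theorem ramp_of_le_left {a b s : ℝ≥0} (h : s ≤ a) : ramp a b s = 0 := by
  simp [ramp, tsub_eq_zero_of_le h]

theorem ramp_of_le_right {a b s : ℝ≥0} (hab : a < b) (h : b ≤ s) : ramp a b s = 1 :=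
  min_eq_left <| (one_le_div (tsub_pos_of_lt hab)).2 (tsub_le_tsub_right h a)

theorem monotone_ramp (a b : ℝ≥0) : Monotone (ramp a b) := fun _ _ h =>
  min_le_min le_rfl (by gcongr)

theorem continuous_ramp (a b : ℝ≥0) : Continuous (ramp a b) :=
  continuous_const.min ((continuous_id.sub continuous_const).div_const _)

theorem exists_mem_Ioc_of_tendsto {r : ℤ → ℝ≥0}
    (hbot : Tendsto r atBot (𝓝 0)) (htop : Tendsto r atTop atTop) {s : ℝ≥0} (hs : 0 < s) :
    ∃ q, s ∈ Ioc (r (q - 1)) (r q) := by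
  obtain ⟨N, hN⟩ := eventually_atBot.1 (hbot.eventually (gt_mem_nhds hs))
  have hbdd : ∀ z, s ≤ r z → N ≤ z := fun z hz => by
    by_contra! h
    exact (hN z h.le).not_ge hz
  obtain ⟨q, hq, hmin⟩ :=
    Int.exists_least_of_bdd ⟨N, hbdd⟩ (htop.eventually_ge_atTop s).exists
  refine ⟨q, lt_of_not_ge fun h => ?_, hq⟩
  have := hmin _ h
  omega

noncomputable def rampTerm (r c : ℤ → ℝ≥0) (q : ℤ) (s : ℝ≥0) : ℝ≥0 :=
  c q * ramp (r (q - 1)) (r q) s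

noncomputable def rampSup (r c : ℤ → ℝ≥0) (s : ℝ≥0) : ℝ≥0 := ⨆ q, rampTerm r c q s

section rampSup

variable {r c : ℤ → ℝ≥0}

theorem continuous_rampTerm (r c : ℤ → ℝ≥0) (q : ℤ) : Continuous (rampTerm r c q) :=
  continuous_const.mul (continuous_ramp _ _)

theorem rampTerm_eq_zero (hr : Monotone r) {p q : ℤ} (hpq : q < p) {s : ℝ≥0}
    (hs : s ≤ r q) : rampTerm r c p s = 0 := by
  rw [rampTerm, ramp_of_le_left (hs.trans (hr (by omega))), mul_zero]

theorem rampTerm_of_le (hr : StrictMono r) {q : ℤ} {s : ℝ≥0} (hs : r q ≤ s) :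
    rampTerm r c q s = c q := by
  rw [rampTerm, ramp_of_le_right (hr (by omega)) hs, mul_one]

theorem rampTerm_le_self (r c : ℤ → ℝ≥0) (q : ℤ) (s : ℝ≥0) : rampTerm r c q s ≤ c q :=
  mul_le_of_le_one_right zero_le (ramp_le_one ..)

theorem rampTerm_le (hr : Monotone r) (hc : Monotone c) (q : ℤ) {s : ℝ≥0} (hs : s ≤ r q)
    (p : ℤ) : rampTerm r c p s ≤ c q := by
  rcases le_or_gt p q with h | h
  · exact (rampTerm_le_self r c p s).trans (hc h)
  · exact (rampTerm_eq_zero hr h hs).trans_le zero_le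

theorem rampSup_zero (r c : ℤ → ℝ≥0) : rampSup r c 0 = 0 := by
  simp [rampSup, rampTerm, ramp_of_le_left]

theorem rampSup_le (hr : Monotone r) (hc : Monotone c) {q : ℤ} {s : ℝ≥0} (hs : s ≤ r q) :
    rampSup r c s ≤ c q :=
  ciSup_le (rampTerm_le hr hc q hs)

theorem bddAbove_range_rampTerm (hr : Monotone r) (hc : Monotone c)
    (htop : Tendsto r atTop atTop) (s : ℝ≥0) : BddAbove (range fun q => rampTerm r c q s) := by
  obtain ⟨q, hq⟩ := (htop.eventually_ge_atTop s).exists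
  exact ⟨c q, forall_mem_range.2 (rampTerm_le hr hc q hq)⟩

theorem rampTerm_le_rampSup (hr : Monotone r) (hc : Monotone c) (htop : Tendsto r atTop atTop)
    (q : ℤ) (s : ℝ≥0) : rampTerm r c q s ≤ rampSup r c s :=
  le_ciSup (bddAbove_range_rampTerm hr hc htop s) q

theorem le_rampSup (hr : StrictMono r) (hc : Monotone c) (htop : Tendsto r atTop atTop)
    {q : ℤ} {s : ℝ≥0} (hs : r q ≤ s) : c q ≤ rampSup r c s :=
  (rampTerm_of_le hr hs).symm.trans_le (rampTerm_le_rampSup hr.monotone hc htop q s)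

theorem monotone_rampSup (hr : Monotone r) (hc : Monotone c) (htop : Tendsto r atTop atTop) :
    Monotone (rampSup r c) := fun _ b h =>
  ciSup_mono (bddAbove_range_rampTerm hr hc htop b) fun _ =>
    mul_le_mul_right (monotone_ramp _ _ h) _

/-- The ramps before `q - 1` have saturated below `c (q - 1)`, those after `q + 1` have not
started. -/
theorem rampSup_eqOn_Ioo (hr : StrictMono r) (hc : Monotone c) (htop : Tendsto r atTop atTop)
    (q : ℤ) : EqOn (rampSup r c)
      (fun s => rampTerm r c (q - 1) s ⊔ rampTerm r c q s ⊔ rampTerm r c (q + 1) s)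
      (Ioo (r (q - 1)) (r (q + 1))) := by
  rintro s ⟨hs₁, hs₂⟩
  have hterm := rampTerm_le_rampSup (c := c) hr.monotone hc htop
  refine le_antisymm (ciSup_le fun p => ?_) (sup_le (sup_le (hterm _ _) (hterm _ _)) (hterm _ _))
  rcases le_or_gt p (q - 1) with hp | hp
  · calc rampTerm r c p s ≤ c (q - 1) := (rampTerm_le_self r c p s).trans (hc hp)
      _ = rampTerm r c (q - 1) s := (rampTerm_of_le hr hs₁.le).symm
      _ ≤ _ := le_sup_left.trans le_sup_left
  · rcases lt_or_ge p (q + 2) with hp' | hp'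
    · obtain rfl | rfl : p = q ∨ p = q + 1 := by omega
      · exact le_sup_right.trans le_sup_left
      · exact le_sup_right
    · exact (rampTerm_eq_zero hr.monotone (by omega) hs₂.le).trans_le zero_le

theorem continuousAt_rampSup_zero (hr : StrictMono r) (hc : Monotone c)
    (hcbot : Tendsto c atBot (𝓝 0)) : ContinuousAt (rampSup r c) 0 := by
  rw [ContinuousAt, rampSup_zero]
  refine tendsto_order.2 ⟨fun _ ha => (not_lt_zero ha).elim, fun a ha => ?_⟩
  obtain ⟨q, hq⟩ := (hcbot.eventually (gt_mem_nhds ha)).exists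
  have hrq : 0 < r q := zero_le.trans_lt (hr (sub_one_lt q))
  filter_upwards [Iio_mem_nhds hrq] with s hs
  exact (rampSup_le hr.monotone hc (le_of_lt hs)).trans_lt hq

theorem continuous_rampSup (hr : StrictMono r) (hc : Monotone c)
    (hrbot : Tendsto r atBot (𝓝 0)) (hrtop : Tendsto r atTop atTop)
    (hcbot : Tendsto c atBot (𝓝 0)) :
    Continuous (rampSup r c) := by
  refine continuous_iff_continuousAt.2 fun s => ?_
  rcases (zero_le : 0 ≤ s).eq_or_lt with rfl | hs
  · exact continuousAt_rampSup_zero hr hc hcbot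
  obtain ⟨q, hq₁, hq₂⟩ := exists_mem_Ioc_of_tendsto hrbot hrtop hs
  have hnhds : Ioo (r (q - 1)) (r (q + 1)) ∈ 𝓝 s :=
    Ioo_mem_nhds hq₁ (hq₂.trans_lt (hr (lt_add_one q)))
  have hcont := ((continuous_rampTerm r c (q - 1)).max (continuous_rampTerm r c q)).max
    (continuous_rampTerm r c (q + 1))
  exact hcont.continuousAt.congr
    (eventuallyEq_of_mem hnhds (rampSup_eqOn_Ioo hr hc hrtop q)).symm

end rampSup

theorem exists_KInfty_overshoot_above_squares_general
    (r R : ℤ → ℝ≥0)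
    (hrmono : StrictMono r) (hRmono : StrictMono R)
    (hrbot : Tendsto r atBot (nhds 0)) (hRbot : Tendsto R atBot (nhds 0))
    (hrtop : Tendsto r atTop atTop) :
    ∃ Υ : ℝ≥0 → ℝ≥0, IsKInfty Υ ∧
      ∀ q : ℤ, ∀ s : ℝ≥0, r (q + 1) < s → s ≤ r (q + 2) →
        R (q + 2) ^ 2 ≤ Υ s := by
  set c : ℤ → ℝ≥0 := fun q => R (q + 1) ^ 2
  have hc : Monotone c := fun p q h =>
    pow_le_pow_left₀ zero_le (hRmono.monotone (by omega)) 2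
  have hcbot : Tendsto c atBot (𝓝 0) := by
    simpa [c, Function.comp_def] using ((continuous_pow 2).tendsto 0).comp
      (hRbot.comp (tendsto_atBot_add_const_right _ 1 tendsto_id))
  refine ⟨fun s => s + rampSup r c s,
    isKInfty_id_add (continuous_rampSup hrmono hc hrbot hrtop hcbot)
      (monotone_rampSup hrmono.monotone hc hrtop) (rampSup_zero r c),
    fun q s hs _ => ?_⟩
  calc R (q + 2) ^ 2 = c (q + 1) := by simp only [c, add_assoc]; norm_num
    _ ≤ rampSup r c s := le_rampSup hrmono hc hrtop hs.le
    _ ≤ s + rampSup r c s := le_add_self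

theorem exists_KInfty_overshoot_above_squares
    (r R : ℤ → ℝ≥0)
    (hrpos : ∀ q, 0 < r q) (hRpos : ∀ q, 0 < R q)
    (hrmono : StrictMono r) (hRmono : StrictMono R)
    (hrbot : Tendsto r atBot (nhds 0)) (hRbot : Tendsto R atBot (nhds 0))
    (hrtop : Tendsto r atTop atTop) (hRtop : Tendsto R atTop atTop)
    (hrR : ∀ q : ℤ, r (q + 1) < R (q + 1)) :
    ∃ Υ : ℝ≥0 → ℝ≥0, IsKInfty Υ ∧
      ∀ q : ℤ, ∀ s : ℝ≥0, r (q + 1) < s → s ≤ r (q + 2) →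
        R (q + 2) ^ 2 ≤ Υ s :=
  exists_KInfty_overshoot_above_squares_general r R hrmono hRmono hrbot hRbot hrtop
end

section
/- Fix L > 0 and T > 0. Let 𝒢_L be the collection of subsets of ℝ × ℝ^n of the form Γ = {(s,y) : θ(y) ≤ s ≤ Θ(y)} \ ({(s,y) : s = Θ(y), y ∈ A_Θ} ∪ {(s,y) : s = θ(y), y ∈ A_θ}), where Θ, θ : ℝ^n → [0,T] are L-Lipschitz continuous and A_Θ, A_θ ⊆ ℝ^n are arbitrary. Then 𝒢_L is a semiring of sets: the empty set belongs to 𝒢_L; 𝒢_L is closed under pairwise intersection; and for any Γ, Γ₁ ∈ 𝒢_L with Γ₁ ⊆ Γ, there exist finitely many pairwise disjoint sets Γ₂, …, Γ_l ∈ 𝒢_L with Γ = Γ₁ ∪ Γ₂ ∪ ⋯ ∪ Γ_l. -/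
open Set

/-- The collection `𝒢_L` of subsets of `ℝ × ℝⁿ` of the form
`{(s,y) : θ(y) ≤ s ≤ Θ(y)} \ ({s = Θ(y), y ∈ A_Θ} ∪ {s = θ(y), y ∈ A_θ})`,
where `Θ, θ : ℝⁿ → [0,T]` are `L`-Lipschitz and `A_Θ, A_θ` are arbitrary. -/
def GammaL (n : ℕ) (L T : ℝ) : Set (Set (ℝ × EuclideanSpace ℝ (Fin n))) :=
  {Γ | ∃ (Θ θ : EuclideanSpace ℝ (Fin n) → ℝ)
        (AΘ Aθ : Set (EuclideanSpace ℝ (Fin n))),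
      (∀ y, Θ y ∈ Icc 0 T) ∧ (∀ y, θ y ∈ Icc 0 T) ∧
      (∀ y₁ y₂, |Θ y₁ - Θ y₂| ≤ L * ‖y₁ - y₂‖) ∧
      (∀ y₁ y₂, |θ y₁ - θ y₂| ≤ L * ‖y₁ - y₂‖) ∧
      Γ = {p : ℝ × EuclideanSpace ℝ (Fin n) | θ p.2 ≤ p.1 ∧ p.1 ≤ Θ p.2} \
          ({p | p.1 = Θ p.2 ∧ p.2 ∈ AΘ} ∪ {p | p.1 = θ p.2 ∧ p.2 ∈ Aθ})}

/-!
A set of `GammaL` is, up to points on the two graphs, the region between the graphs of two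
`L`-Lipschitz profiles `θ, Θ` with values in `[0, T]`: it contains the open band `θ < s < Θ` and
lies in the closed band `θ ≤ s ≤ Θ`, and conversely every such set is in `GammaL`. Pointwise `max`
and `min` preserve admissible profiles, so `Γ ∩ Γ'` is the band between `θ ⊔ θ'` and `Θ ⊓ Θ'`.
For `Γ₁ ⊆ Γ`, choose admissible `lo ≤ hi` such that `Γ₁` lies between them and contains everything
strictly between them; cutting `Γ \ Γ₁` along the graph of `hi` leaves a band between `hi` and
`Θ` and a band between `θ` and `lo`.
-/

section Band

variable {Y : Type*} {Θ θ Θ' θ' : Y → ℝ} {Γ Γ' Γ₁ : Set (ℝ × Y)}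

def closedBand (Θ θ : Y → ℝ) : Set (ℝ × Y) := {p | θ p.2 ≤ p.1 ∧ p.1 ≤ Θ p.2}

def openBand (Θ θ : Y → ℝ) : Set (ℝ × Y) := {p | θ p.2 < p.1 ∧ p.1 < Θ p.2}

def IsBand (Θ θ : Y → ℝ) (Γ : Set (ℝ × Y)) : Prop := openBand Θ θ ⊆ Γ ∧ Γ ⊆ closedBand Θ θ

theorem isBand_iff_exists_eq_sdiff : IsBand Θ θ Γ ↔ ∃ AΘ Aθ : Set Y,
    Γ = {p : ℝ × Y | θ p.2 ≤ p.1 ∧ p.1 ≤ Θ p.2} \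
      ({p | p.1 = Θ p.2 ∧ p.2 ∈ AΘ} ∪ {p | p.1 = θ p.2 ∧ p.2 ∈ Aθ}) := by
  constructor
  · rintro ⟨hopen, hclosed⟩
    refine ⟨{y | (Θ y, y) ∉ Γ}, {y | (θ y, y) ∉ Γ}, ?_⟩
    ext ⟨s, y⟩
    simp only [mem_sdiff, mem_union, mem_ofPred_eq, not_or, not_and, not_not]
    constructor
    · intro hp
      exact ⟨hclosed hp, fun h => h ▸ hp, fun h => h ▸ hp⟩
    · rintro ⟨⟨hθs, hsΘ⟩, hΘ, hθ⟩
      rcases hθs.lt_or_eq with hθs | rfl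
      · rcases hsΘ.lt_or_eq with hsΘ | rfl
        · exact hopen ⟨hθs, hsΘ⟩
        · exact hΘ rfl
      · exact hθ rfl
  · rintro ⟨AΘ, Aθ, rfl⟩
    refine ⟨fun p ⟨hθs, hsΘ⟩ => ⟨⟨hθs.le, hsΘ.le⟩, ?_⟩, sdiff_subset⟩
    rintro (⟨h, -⟩ | ⟨h, -⟩)
    exacts [hsΘ.ne h, hθs.ne' h]

theorem openBand_inf_sup :
    openBand (Θ ⊓ Θ') (θ ⊔ θ') = openBand Θ θ ∩ openBand Θ' θ' := by
  ext p
  simp only [openBand, mem_inter_iff, mem_ofPred_eq, Pi.inf_apply, Pi.sup_apply, sup_lt_iff,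
    lt_inf_iff]
  tauto

theorem closedBand_inf_sup :
    closedBand (Θ ⊓ Θ') (θ ⊔ θ') = closedBand Θ θ ∩ closedBand Θ' θ' := by
  ext p
  simp only [closedBand, mem_inter_iff, mem_ofPred_eq, Pi.inf_apply, Pi.sup_apply, sup_le_iff,
    le_inf_iff]
  tauto

theorem IsBand.inter (h : IsBand Θ θ Γ) (h' : IsBand Θ' θ' Γ') :
    IsBand (Θ ⊓ Θ') (θ ⊔ θ') (Γ ∩ Γ') :=
  ⟨openBand_inf_sup.subset.trans (inter_subset_inter h.1 h'.1),
    (inter_subset_inter h.2 h'.2).trans closedBand_inf_sup.superset⟩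

theorem IsBand.sdiff_inter_upper {hi : Y → ℝ} (hΓ : IsBand Θ θ Γ) (hhi : θ ⊓ Θ ≤ hi)
    (hΓ₁ : Γ₁ ⊆ {p | p.1 ≤ hi p.2}) :
    IsBand Θ hi ((Γ \ Γ₁) ∩ {p | hi p.2 ≤ p.1}) := by
  refine ⟨fun p ⟨hhis, hsΘ⟩ => ⟨⟨hΓ.1 ⟨?_, hsΘ⟩, fun hs => (hΓ₁ hs).not_gt hhis⟩, hhis.le⟩,
    fun p hp => ⟨hp.2, (hΓ.2 hp.1.1).2⟩⟩
  exact (inf_lt_iff.1 ((hhi p.2).trans_lt hhis)).resolve_right hsΘ.not_gt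

theorem IsBand.sdiff_inter_lower {lo hi : Y → ℝ} (hΓ : IsBand Θ θ Γ) (hloΘ : lo ≤ Θ)
    (hlohi : lo ≤ hi) (hΓ₁ : Γ₁ ⊆ {p | lo p.2 ≤ p.1}) (hgap : openBand hi lo ⊆ Γ₁) :
    IsBand lo θ ((Γ \ Γ₁) ∩ {p | hi p.2 ≤ p.1}ᶜ) := by
  refine ⟨fun p ⟨hθs, hslo⟩ => ⟨⟨hΓ.1 ⟨hθs, hslo.trans_le (hloΘ _)⟩,
    fun hs => (hΓ₁ hs).not_gt hslo⟩, (hslo.trans_le (hlohi _)).not_ge⟩, fun p hp => ?_⟩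
  exact ⟨(hΓ.2 hp.1.1).1, not_lt.1 fun hlos => hp.1.2 (hgap ⟨hlos, not_le.1 hp.2⟩)⟩

end Band

section Admissible

variable {Y : Type*} [SeminormedAddCommGroup Y] {L T : ℝ} {f g : Y → ℝ}

def IsAdmissible (L T : ℝ) (f : Y → ℝ) : Prop :=
  (∀ y, f y ∈ Icc 0 T) ∧ ∀ y₁ y₂, |f y₁ - f y₂| ≤ L * ‖y₁ - y₂‖

theorem isAdmissible_zero (hL : 0 ≤ L) (hT : 0 ≤ T) : IsAdmissible L T (0 : Y → ℝ) :=
  ⟨fun _ => ⟨le_rfl, hT⟩, fun _ _ => by simpa using mul_nonneg hL (norm_nonneg _)⟩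

theorem IsAdmissible.sup (hf : IsAdmissible L T f) (hg : IsAdmissible L T g) :
    IsAdmissible L T (f ⊔ g) :=
  ⟨fun y => ⟨(hf.1 y).1.trans le_sup_left, sup_le (hf.1 y).2 (hg.1 y).2⟩, fun y₁ y₂ =>
    (abs_max_sub_max_le_max _ _ _ _).trans (max_le (hf.2 y₁ y₂) (hg.2 y₁ y₂))⟩

theorem IsAdmissible.inf (hf : IsAdmissible L T f) (hg : IsAdmissible L T g) :
    IsAdmissible L T (f ⊓ g) :=
  ⟨fun y => ⟨le_inf (hf.1 y).1 (hg.1 y).1, inf_le_left.trans (hf.1 y).2⟩, fun y₁ y₂ =>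
    (abs_min_sub_min_le_max _ _ _ _).trans (max_le (hf.2 y₁ y₂) (hg.2 y₁ y₂))⟩

end Admissible

theorem mem_GammaL_iff {n : ℕ} {L T : ℝ} {Γ : Set (ℝ × EuclideanSpace ℝ (Fin n))} :
    Γ ∈ GammaL n L T ↔
      ∃ Θ θ, IsAdmissible L T Θ ∧ IsAdmissible L T θ ∧ IsBand Θ θ Γ := by
  constructor
  · rintro ⟨Θ, θ, AΘ, Aθ, hΘ, hθ, hΘL, hθL, rfl⟩
    exact ⟨Θ, θ, ⟨hΘ, hΘL⟩, ⟨hθ, hθL⟩, isBand_iff_exists_eq_sdiff.2 ⟨AΘ, Aθ, rfl⟩⟩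
  · rintro ⟨Θ, θ, ⟨hΘ, hΘL⟩, ⟨hθ, hθL⟩, hband⟩
    obtain ⟨AΘ, Aθ, rfl⟩ := isBand_iff_exists_eq_sdiff.1 hband
    exact ⟨Θ, θ, AΘ, Aθ, hΘ, hθ, hΘL, hθL, rfl⟩

section GammaL

variable {n : ℕ} {L T : ℝ} {Γ Γ₁ : Set (ℝ × EuclideanSpace ℝ (Fin n))}

theorem empty_mem_GammaL (hL : 0 ≤ L) (hT : 0 ≤ T) : ∅ ∈ GammaL n L T :=
  mem_GammaL_iff.2 ⟨0, 0, isAdmissible_zero hL hT, isAdmissible_zero hL hT,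
    fun _ h => (h.1.trans h.2).false, empty_subset _⟩

theorem inter_mem_GammaL {Γ' : Set (ℝ × EuclideanSpace ℝ (Fin n))} (hΓ : Γ ∈ GammaL n L T)
    (hΓ' : Γ' ∈ GammaL n L T) : Γ ∩ Γ' ∈ GammaL n L T := by
  obtain ⟨Θ, θ, hΘ, hθ, hband⟩ := mem_GammaL_iff.1 hΓ
  obtain ⟨Θ', θ', hΘ', hθ', hband'⟩ := mem_GammaL_iff.1 hΓ'
  exact mem_GammaL_iff.2 ⟨_, _, hΘ.inf hΘ', hθ.sup hθ', hband.inter hband'⟩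

theorem exists_sdiff_eq_union_of_subset (hΓ : Γ ∈ GammaL n L T) (hΓ₁ : Γ₁ ∈ GammaL n L T)
    (hsub : Γ₁ ⊆ Γ) : ∃ F ∈ GammaL n L T, ∃ G ∈ GammaL n L T,
      F ⊆ Γ \ Γ₁ ∧ G ⊆ Γ \ Γ₁ ∧ Disjoint F G ∧ Γ = Γ₁ ∪ F ∪ G := by
  obtain ⟨Θ, θ, hΘ, hθ, hband⟩ := mem_GammaL_iff.1 hΓ
  obtain ⟨Θ₁, θ₁, hΘ₁, hθ₁, hband₁⟩ := mem_GammaL_iff.1 hΓ₁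
  have hband₁' : IsBand (Θ ⊓ Θ₁) (θ ⊔ θ₁) Γ₁ := by
    simpa only [inter_eq_right.2 hsub] using hband.inter hband₁
  -- Clamping by `Θ` keeps `lo ≤ Θ` and `lo ≤ hi` even where the band of `Γ₁` is empty, and
  -- everything strictly between `lo` and `hi` lies in `Γ₁`.
  set lo := (θ ⊔ θ₁) ⊓ Θ
  set hi := (Θ ⊓ Θ₁) ⊔ lo
  set P : Set (ℝ × EuclideanSpace ℝ (Fin n)) := {p | hi p.2 ≤ p.1}
  have hupper : IsBand Θ hi ((Γ \ Γ₁) ∩ P) :=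
    hband.sdiff_inter_upper (le_sup_of_le_right (inf_le_inf_right Θ le_sup_left))
      fun p hp => le_sup_of_le_left (hband₁'.2 hp).2
  have hlower : IsBand lo θ ((Γ \ Γ₁) ∩ Pᶜ) := by
    refine hband.sdiff_inter_lower inf_le_right le_sup_right
      (fun p hp => inf_le_of_left_le (hband₁'.2 hp).1) fun p ⟨hlo, hhi⟩ => hband₁'.1 ?_
    have hup : p.1 < (Θ ⊓ Θ₁) p.2 := (lt_sup_iff.1 hhi).resolve_right hlo.not_gt
    exact ⟨(inf_lt_iff.1 hlo).resolve_right (hup.trans_le inf_le_left).not_gt, hup⟩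
  refine ⟨_, mem_GammaL_iff.2 ⟨_, _, hΘ, (hΘ.inf hΘ₁).sup ((hθ.sup hθ₁).inf hΘ), hupper⟩,
    _, mem_GammaL_iff.2 ⟨_, _, (hθ.sup hθ₁).inf hΘ, hθ, hlower⟩, inter_subset_left,
    inter_subset_left, disjoint_compl_right.mono inter_subset_right inter_subset_right, ?_⟩
  rw [union_assoc, ← inter_union_distrib_left, union_compl_self, inter_univ,
    union_sdiff_cancel hsub]

end GammaL

theorem GammaL_is_semiring (n : ℕ) (L T : ℝ) (hL : 0 < L) (hT : 0 < T) :
    (∅ ∈ GammaL n L T) ∧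
    (∀ Γ Γ', Γ ∈ GammaL n L T → Γ' ∈ GammaL n L T → Γ ∩ Γ' ∈ GammaL n L T) ∧
    (∀ Γ Γ₁, Γ ∈ GammaL n L T → Γ₁ ∈ GammaL n L T → Γ₁ ⊆ Γ →
      ∃ (l : ℕ) (F : Fin l → Set (ℝ × EuclideanSpace ℝ (Fin n))),
        (∀ i, F i ∈ GammaL n L T) ∧
        (∀ i j, i ≠ j → Disjoint (F i) (F j)) ∧
        (∀ i, Disjoint Γ₁ (F i)) ∧
        Γ = Γ₁ ∪ ⋃ i, F i) := by
  refine ⟨empty_mem_GammaL hL.le hT.le, fun _ _ => inter_mem_GammaL,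
    fun Γ Γ₁ hΓ hΓ₁ hsub => ?_⟩
  obtain ⟨F, hF, G, hG, hFΓ, hGΓ, hFG, hcover⟩ := exists_sdiff_eq_union_of_subset hΓ hΓ₁ hsub
  refine ⟨2, ![F, G], Fin.forall_fin_two.2 ⟨hF, hG⟩, ?_,
    Fin.forall_fin_two.2 ⟨disjoint_sdiff_right.mono_right hFΓ,
      disjoint_sdiff_right.mono_right hGΓ⟩, ?_⟩
  · simp [Fin.forall_fin_two, hFG, hFG.symm]
  · ext p
    simp [hcover, Fin.exists_fin_two, or_assoc]
end

section
/- Let v : ℝ × ℝ^n → ℝ^m be continuous, T-periodic in its first argument (v(t+T, y) = v(t, y) for all t, y), and C^∞ on [0,T] × ℝ^n. Suppose that for every y there exist h > 0 and a neighborhood U of y such that v(t, y') = w(t, y') for all t ∈ [0,h] ∪ [T−h, T] and y' ∈ U, where w : ℝ × ℝ^n → ℝ^m is C^∞ and T-periodic. Then the T-periodic extension of v|_{[0,T]×ℝ^n} to ℝ × ℝ^n is of class C^∞. -/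
theorem periodic_extension_smooth (n m : ℕ) (T : ℝ) (hT : 0 < T)
    (v : ℝ × EuclideanSpace ℝ (Fin n) → EuclideanSpace ℝ (Fin m))
    (hv : Continuous v)
    (hper : ∀ (t : ℝ) (y : EuclideanSpace ℝ (Fin n)), v (t + T, y) = v (t, y))
    (hsmooth : ContDiffOn ℝ (⊤ : ℕ∞) v (Set.Icc 0 T ×ˢ Set.univ))
    (hseam : ∀ y : EuclideanSpace ℝ (Fin n), ∃ h > (0 : ℝ),
      ∃ U ∈ nhds y,
        ∃ w : ℝ × EuclideanSpace ℝ (Fin n) → EuclideanSpace ℝ (Fin m),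
          ContDiff ℝ (⊤ : ℕ∞) w ∧
          (∀ (t : ℝ) (y' : EuclideanSpace ℝ (Fin n)), w (t + T, y') = w (t, y')) ∧
          ∀ t ∈ Set.Icc 0 h ∪ Set.Icc (T - h) T, ∀ y' ∈ U,
            v (t, y') = w (t, y')) :
    ContDiff ℝ (⊤ : ℕ∞) v := by
  have key : ∀ (k : ℤ) (t : ℝ) (y : EuclideanSpace ℝ (Fin n)),
      v (t + (k : ℝ) * T, y) = v (t, y) := by
    intro k
    induction k using Int.induction_on with
    | zero => intro t y; simp
    | succ k ih =>
      intro t y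
      have h1 : t + ((k : ℤ) + 1 : ℤ) * T = (t + (k : ℝ) * T) + T := by push_cast; ring
      rw [h1, hper]; exact_mod_cast ih t y
    | pred k ih =>
      intro t y
      have h1 : (t + (-(k : ℤ) - 1 : ℤ) * T) + T = t + (-(k : ℤ) : ℤ) * T := by
        push_cast; ring
      rw [← ih t y, ← h1, hper]
  rw [contDiff_iff_contDiffAt]
  rintro ⟨t, y⟩
  set k : ℤ := ⌊t / T⌋ with hk
  set s : ℝ := t - k * T with hs
  have hs0 : 0 ≤ s := Int.sub_floor_div_mul_nonneg t hT
  have hsT : s < T := Int.sub_floor_div_mul_lt t hT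
  suffices hat : ContDiffAt ℝ (⊤ : ℕ∞) v (s, y) by
    have hg : ContDiffAt ℝ (⊤ : ℕ∞)
        (fun p : ℝ × EuclideanSpace ℝ (Fin n) => ((p.1 - (k : ℝ) * T, p.2) :
          ℝ × EuclideanSpace ℝ (Fin n))) (t, y) := by
      apply ContDiffAt.prodMk
      · exact (contDiffAt_fst.sub contDiffAt_const)
      · exact contDiffAt_snd
    have hcomp := hat.comp (t, y) (by simpa [hs] using hg)
    have hveq : v = (fun p : ℝ × EuclideanSpace ℝ (Fin n) =>
        v (p.1 - (k : ℝ) * T, p.2)) := by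
      funext p
      simpa using key k (p.1 - (k : ℝ) * T) p.2
    rw [hveq]
    exact hcomp
  rcases eq_or_lt_of_le hs0 with hzero | hpos
  · -- seam case: s = 0
    obtain ⟨h, hh, U, hU, w, hw, hwper, heq⟩ := hseam y
    have hvw : v =ᶠ[nhds ((s, y) : ℝ × EuclideanSpace ℝ (Fin n))] w := by
      have hmem : (Set.Ioo (-h) h ×ˢ U) ∈
          nhds ((s, y) : ℝ × EuclideanSpace ℝ (Fin n)) := by
        apply prod_mem_nhds _ hU
        rw [← hzero]
        exact Ioo_mem_nhds (by linarith) hh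
      filter_upwards [hmem] with p hp
      obtain ⟨⟨hp1, hp2⟩, hpU⟩ := hp
      rcases le_or_gt 0 p.1 with h0 | h0
      · exact heq p.1 (Or.inl ⟨h0, hp2.le⟩) p.2 hpU
      · have h1 : v (p.1, p.2) = v (p.1 + T, p.2) := (hper p.1 p.2).symm
        have h2 : v (p.1 + T, p.2) = w (p.1 + T, p.2) :=
          heq (p.1 + T) (Or.inr ⟨by linarith, by linarith⟩) p.2 hpU
        rw [h1, h2, hwper]
    exact (hw.contDiffAt).congr_of_eventuallyEq hvw
  · -- interior case: 0 < s < T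
    exact hsmooth.contDiffAt
      (prod_mem_nhds (Icc_mem_nhds hpos hsT) Filter.univ_mem)
end

section
/- Let Γ'' = {(s,y) ∈ ℝ × ℝ^n : θ(y) + h ≤ s ≤ Θ(y) − h} and Γ' = {(s,y) : θ(y) + h/2 ≤ s ≤ Θ(y) − h/2} where θ, Θ are L-Lipschitz and h > 0. Then the distance between Γ'' and the complement of Γ' is at least h / (2√(1 + L²)). -/
lemma add_mul_le_sqrt_one_add_sq_mul_sqrt (a b L : ℝ) :
    a + L * b ≤ √(1 + L ^ 2) * √(a ^ 2 + b ^ 2) := by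
  rw [← Real.sqrt_mul (by positivity)]
  exact Real.le_sqrt_of_sq_le (by nlinarith [sq_nonneg (L * a - b)])

/-- The heights `s - θ y` and `Θ y - s` above and below the two graphs are `(1, L)`-Lipschitz,
so moving from height `≥ h` to height `< h / 2` costs at least `h / 2`. -/
lemma half_le_abs_sub_add_mul_norm_sub {E : Type*} [SeminormedAddCommGroup E]
    {L h : ℝ} {θ Θ : E → ℝ}
    (hθ : ∀ y₁ y₂, |θ y₁ - θ y₂| ≤ L * ‖y₁ - y₂‖)
    (hΘ : ∀ y₁ y₂, |Θ y₁ - Θ y₂| ≤ L * ‖y₁ - y₂‖)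
    {s s' : ℝ} {y y' : E} (hlo : θ y + h ≤ s) (hhi : s ≤ Θ y - h)
    (hout : ¬(θ y' + h / 2 ≤ s' ∧ s' ≤ Θ y' - h / 2)) :
    h / 2 ≤ |s - s'| + L * ‖y - y'‖ := by
  by_contra! hclose
  have hθyy' := abs_le.mp (hθ y y')
  have hΘyy' := abs_le.mp (hΘ y y')
  exact hout ⟨by linarith [le_abs_self (s - s')], by linarith [neg_abs_le (s - s')]⟩

theorem distance_between_shrunk_graph_sets_general (n : ℕ) (L h : ℝ)
    (Θ θ : EuclideanSpace ℝ (Fin n) → ℝ)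
    (hΘlip : ∀ y₁ y₂, |Θ y₁ - Θ y₂| ≤ L * ‖y₁ - y₂‖)
    (hθlip : ∀ y₁ y₂, |θ y₁ - θ y₂| ≤ L * ‖y₁ - y₂‖) :
    let Γ' : Set (ℝ × EuclideanSpace ℝ (Fin n)) :=
      {p | θ p.2 + h / 2 ≤ p.1 ∧ p.1 ≤ Θ p.2 - h / 2}
    let Γ'' : Set (ℝ × EuclideanSpace ℝ (Fin n)) :=
      {p | θ p.2 + h ≤ p.1 ∧ p.1 ≤ Θ p.2 - h}
    ∀ (s : ℝ) (y : EuclideanSpace ℝ (Fin n)) (s' : ℝ)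
      (y' : EuclideanSpace ℝ (Fin n)),
      (s, y) ∈ Γ'' → (s', y') ∉ Γ' →
        h / (2 * Real.sqrt (1 + L ^ 2)) ≤
          Real.sqrt ((s - s') ^ 2 + ‖y - y'‖ ^ 2) := by
  intro Γ' Γ'' s y s' y' ⟨hlo, hhi⟩ hout
  have hcost : h / 2 ≤ |s - s'| + L * ‖y - y'‖ :=
    half_le_abs_sub_add_mul_norm_sub hθlip hΘlip hlo hhi hout
  have hcs := add_mul_le_sqrt_one_add_sq_mul_sqrt |s - s'| ‖y - y'‖ L
  rw [sq_abs] at hcs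
  rw [div_le_iff₀ (by positivity)]
  linarith

theorem distance_between_shrunk_graph_sets (n : ℕ) (L h : ℝ) (hh : 0 < h)
    (hL : 0 ≤ L)
    (Θ θ : EuclideanSpace ℝ (Fin n) → ℝ)
    (hΘlip : ∀ y₁ y₂, |Θ y₁ - Θ y₂| ≤ L * ‖y₁ - y₂‖)
    (hθlip : ∀ y₁ y₂, |θ y₁ - θ y₂| ≤ L * ‖y₁ - y₂‖) :
    let Γ' : Set (ℝ × EuclideanSpace ℝ (Fin n)) :=
      {p | θ p.2 + h / 2 ≤ p.1 ∧ p.1 ≤ Θ p.2 - h / 2}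
    let Γ'' : Set (ℝ × EuclideanSpace ℝ (Fin n)) :=
      {p | θ p.2 + h ≤ p.1 ∧ p.1 ≤ Θ p.2 - h}
    ∀ (s : ℝ) (y : EuclideanSpace ℝ (Fin n)) (s' : ℝ)
      (y' : EuclideanSpace ℝ (Fin n)),
      (s, y) ∈ Γ'' → (s', y') ∉ Γ' →
        h / (2 * Real.sqrt (1 + L ^ 2)) ≤
          Real.sqrt ((s - s') ^ 2 + ‖y - y'‖ ^ 2) :=
  distance_between_shrunk_graph_sets_general n L h Θ θ hΘlip hθlip
end
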